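/- If there exists a sequence of gradient discretisations that is both consistent and compact, then the embedding of W_G (equipped with the graph norm ‖·‖_{W_G,𝒢}) into L is compact: every sequence bounded in W_G for the graph norm admits a subsequence converging strongly in L. -/

import Mathlib

open NormedSpace Filter Topology

noncomputable section

variable {L Lv : Type*} [NormedAddCommGroup L] [NormedSpace ℝ L]
  [NormedAddCommGroup Lv] [NormedSpace ℝ Lv]

/-- The seminorm `|u|_{L,V} = sup_{μ ∈ V \ {0}} |⟨μ,u⟩| / ‖μ‖` (equal to `0` when `V = {0}`,
since `sSup ∅ = 0` in `ℝ`). -/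
noncomputable def semV (V : Submodule ℝ (StrongDual ℝ L)) (u : L) : ℝ :=
  sSup ((fun μ : StrongDual ℝ L => |μ u| / ‖μ‖) '' {μ : StrongDual ℝ L | μ ∈ V ∧ μ ≠ 0})

/-- `IsWDpair W_G G φ w` says that `φ ∈ 𝐖_D` with `D φ = w`, i.e. the abstract Stokes formula
`⟨φ, G u⟩ + ⟨w, u⟩ = 0` holds for all `u ∈ W_G`. -/
def IsWDpair (WG : Submodule ℝ L) (G : ↥WG →ₗ[ℝ] Lv) (φ : StrongDual ℝ Lv) (w : StrongDual ℝ L) : Prop :=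
  ∀ u : ↥WG, φ (G u) + w (u : L) = 0

/-- A gradient discretisation `𝒟 = (X_𝒟, P_𝒟, G_𝒟)`: a finite-dimensional real vector space
`X`, a function reconstruction `P : X → L` and a gradient reconstruction `Gd : X → Lv`, such
that `v ↦ (|P v|_{L,V}^p + ‖Gd v‖^p)^{1/p}` is a norm on `X` (definiteness is the only
non-automatic condition). -/
structure GradDisc (L Lv : Type*) [NormedAddCommGroup L] [NormedSpace ℝ L]
    [NormedAddCommGroup Lv] [NormedSpace ℝ Lv]
    (V : Submodule ℝ (StrongDual ℝ L)) (p : ℝ) where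
  X : Type
  [instAddCommGroup : AddCommGroup X]
  [instModule : Module ℝ X]
  [instFin : FiniteDimensional ℝ X]
  P : X →ₗ[ℝ] L
  Gd : X →ₗ[ℝ] Lv
  dnorm_definite : ∀ v : X, (semV V (P v) ^ p + ‖Gd v‖ ^ p) ^ (1 / p) = 0 → v = 0

attribute [instance] GradDisc.instAddCommGroup GradDisc.instModule GradDisc.instFin

namespace GradDisc

variable {V : Submodule ℝ (StrongDual ℝ L)} {p : ℝ}

/-- The discrete norm `‖v‖_𝒟 = (|P_𝒟 v|_{L,V}^p + ‖G_𝒟 v‖_Lv^p)^{1/p}`. -/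
noncomputable def dnorm (D : GradDisc L Lv V p) (v : D.X) : ℝ :=
  (semV V (D.P v) ^ p + ‖D.Gd v‖ ^ p) ^ (1 / p)

/-- `C_𝒟 = max_{v ≠ 0} ‖P_𝒟 v‖_L / ‖v‖_𝒟`. -/
noncomputable def CD (D : GradDisc L Lv V p) : ℝ :=
  sSup ((fun v : D.X => ‖D.P v‖ / D.dnorm v) '' {v : D.X | v ≠ 0})

/-- `W_𝒟(φ) = sup_{u ≠ 0} |⟨φ, G_𝒟 u⟩ + ⟨D φ, P_𝒟 u⟩| / ‖u‖_𝒟`, where `w = D φ`. -/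
noncomputable def WDdef (D : GradDisc L Lv V p) (φ : StrongDual ℝ Lv) (w : StrongDual ℝ L) : ℝ :=
  sSup ((fun u : D.X => |φ (D.Gd u) + w (D.P u)| / D.dnorm u) '' {u : D.X | u ≠ 0})

/-- `S_𝒟(φ) = min_v (‖P_𝒟 v − φ‖_L + ‖G_𝒟 v − G φ‖_Lv)`, where `gφ = G φ`. -/
noncomputable def SDdef (D : GradDisc L Lv V p) (φ : L) (gφ : Lv) : ℝ :=
  sInf (Set.range fun v : D.X => ‖D.P v - φ‖ + ‖D.Gd v - gφ‖)

end GradDisc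

/-- Coercivity of a sequence of gradient discretisations: `sup_m C_{𝒟_m} < ∞`. -/
def Coercive {V : Submodule ℝ (StrongDual ℝ L)} {p : ℝ} (D : ℕ → GradDisc L Lv V p) : Prop :=
  ∃ C : ℝ, ∀ m : ℕ, (D m).CD ≤ C

/-- Limit-conformity: `W_{𝒟_m}(φ) → 0` for every `φ ∈ 𝐖_D` (with `w = D φ`). -/
def LimitConforming (WG : Submodule ℝ L) (G : ↥WG →ₗ[ℝ] Lv)
    {V : Submodule ℝ (StrongDual ℝ L)} {p : ℝ} (D : ℕ → GradDisc L Lv V p) : Prop :=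
  ∀ (φ : StrongDual ℝ Lv) (w : StrongDual ℝ L), IsWDpair WG G φ w →
    Filter.Tendsto (fun m => (D m).WDdef φ w) Filter.atTop (𝓝 0)

/-- Consistency: `S_{𝒟_m}(φ) → 0` for every `φ ∈ W_G`. -/
def Consistent (WG : Submodule ℝ L) (G : ↥WG →ₗ[ℝ] Lv)
    {V : Submodule ℝ (StrongDual ℝ L)} {p : ℝ} (D : ℕ → GradDisc L Lv V p) : Prop :=
  ∀ u : ↥WG, Filter.Tendsto (fun m => (D m).SDdef (u : L) (G u)) Filter.atTop (𝓝 0)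

/-- Compactness: bounded discrete sequences have relatively compact reconstructions in `L`. -/
def CompactSeq {V : Submodule ℝ (StrongDual ℝ L)} {p : ℝ} (D : ℕ → GradDisc L Lv V p) : Prop :=
  ∀ u : (m : ℕ) → (D m).X, (∃ C : ℝ, ∀ m : ℕ, (D m).dnorm (u m) ≤ C) →
    IsCompact (closure (Set.range fun m => (D m).P (u m)))


/-!
Take `u` bounded in the graph norm. By consistency, each `u n` has an approximant `vₙ` in some
`𝒟_{m n}` with `‖P_𝒟 vₙ - u n‖ + ‖G_𝒟 vₙ - G (u n)‖ → 0`, and `m` can be taken strictly increasing.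
Since `S_𝒟(u) ≤ ‖u‖ + ‖G u‖` (compare with `v = 0`), these approximants are bounded in the discrete
norms, so compactness of the discretisations gives a convergent subsequence of `P_𝒟 vₙ`, and the
same subsequence of `u` has the same limit.
-/

lemma le_rpow_add_rpow_one_div {p a b : ℝ} (hp : 0 < p) (ha : 0 ≤ a) (hb : 0 ≤ b) :
    a ≤ (a ^ p + b ^ p) ^ (1 / p) := by
  calc a = (a ^ p) ^ (1 / p) := by rw [← Real.rpow_mul ha, mul_one_div_cancel hp.ne', Real.rpow_one]
    _ ≤ (a ^ p + b ^ p) ^ (1 / p) := by gcongr; exact le_add_of_nonneg_right (by positivity)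

lemma add_le_two_mul_rpow_add_rpow_one_div {p a b : ℝ} (hp : 0 < p) (ha : 0 ≤ a) (hb : 0 ≤ b) :
    a + b ≤ 2 * (a ^ p + b ^ p) ^ (1 / p) := by
  have hb' := le_rpow_add_rpow_one_div hp hb ha
  rw [add_comm (b ^ p)] at hb'
  linarith [le_rpow_add_rpow_one_div hp ha hb]

lemma semV_nonneg (V : Submodule ℝ (StrongDual ℝ L)) (u : L) : 0 ≤ semV V u := by
  apply Real.sSup_nonneg
  rintro x ⟨μ, -, rfl⟩
  positivity

lemma semV_le_norm (V : Submodule ℝ (StrongDual ℝ L)) (u : L) : semV V u ≤ ‖u‖ := by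
  apply Real.sSup_le _ (norm_nonneg u)
  rintro x ⟨μ, ⟨-, hμ⟩, rfl⟩
  rw [div_le_iff₀ (norm_pos_iff.2 hμ), mul_comm]
  exact μ.le_opNorm u

namespace GradDisc

variable {V : Submodule ℝ (StrongDual ℝ L)} {p : ℝ} (D : GradDisc L Lv V p)

lemma dnorm_le_norm_add_norm (hp : 1 ≤ p) (v : D.X) : D.dnorm v ≤ ‖D.P v‖ + ‖D.Gd v‖ :=
  (Real.rpow_add_rpow_le_add (semV_nonneg V _) (norm_nonneg _) hp).trans
    (add_le_add_left (semV_le_norm V _) _)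

lemma SDdef_le (φ : L) (g : Lv) (v : D.X) : D.SDdef φ g ≤ ‖D.P v - φ‖ + ‖D.Gd v - g‖ := by
  refine csInf_le ⟨0, ?_⟩ ⟨v, rfl⟩
  rintro _ ⟨w, rfl⟩
  positivity

lemma SDdef_le_norm_add_norm (φ : L) (g : Lv) : D.SDdef φ g ≤ ‖φ‖ + ‖g‖ := by
  simpa using D.SDdef_le φ g 0

lemma exists_lt_SDdef_add (φ : L) (g : Lv) {ε : ℝ} (hε : 0 < ε) :
    ∃ v : D.X, ‖D.P v - φ‖ + ‖D.Gd v - g‖ < D.SDdef φ g + ε := by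
  obtain ⟨_, ⟨v, rfl⟩, hv⟩ :=
    Real.lt_sInf_add_pos (Set.range_nonempty fun v : D.X => ‖D.P v - φ‖ + ‖D.Gd v - g‖) hε
  exact ⟨v, hv⟩

lemma norm_add_norm_le_of_lt_SDdef_add {φ : L} {g : Lv} {ε : ℝ} {v : D.X}
    (hv : ‖D.P v - φ‖ + ‖D.Gd v - g‖ < D.SDdef φ g + ε) :
    ‖D.P v‖ + ‖D.Gd v‖ ≤ 2 * (‖φ‖ + ‖g‖) + ε := by
  have hP := norm_le_norm_sub_add (D.P v) φ
  have hG := norm_le_norm_sub_add (D.Gd v) g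
  linarith [D.SDdef_le_norm_add_norm φ g]

end GradDisc

lemma CompactSeq.exists_tendsto_subseq {V : Submodule ℝ (StrongDual ℝ L)} {p : ℝ}
    {D : ℕ → GradDisc L Lv V p} (hD : CompactSeq D) (v : (k : ℕ) → ℕ → (D k).X) {C : ℝ}
    (hC : ∀ k n, (D k).dnorm (v k n) ≤ C) {m : ℕ → ℕ} (hm : Function.Injective m) :
    ∃ l : L, ∃ ψ : ℕ → ℕ, StrictMono ψ ∧
      Tendsto (fun j => (D (m (ψ j))).P (v (m (ψ j)) (ψ j))) atTop (𝓝 l) := by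
  classical
  have hcpt := hD (fun k => v k (Function.invFun m k)) ⟨C, fun k => hC _ _⟩
  have hmem : ∀ n, (D (m n)).P (v (m n) n) ∈
      closure (Set.range fun k => (D k).P (v k (Function.invFun m k))) := fun n =>
    subset_closure ⟨m n, by dsimp only; rw [Function.leftInverse_invFun hm n]⟩
  obtain ⟨l, -, ψ, hψ, hlim⟩ := hcpt.tendsto_subseq hmem
  exact ⟨l, ψ, hψ, hlim⟩

theorem compact_consistent_GDs_implies_compact_embedding_general
    (WG : Submodule ℝ L)
    (G : ↥WG →ₗ[ℝ] Lv)
    (p : ℝ) (hp : 1 < p)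
    (V : Submodule ℝ (StrongDual ℝ L))
    (hex : ∃ D : ℕ → GradDisc L Lv V p, Consistent WG G D ∧ CompactSeq D) :
    ∀ u : ℕ → ↥WG,
      (∃ C : ℝ, ∀ n : ℕ, (‖(u n : L)‖ ^ p + ‖G (u n)‖ ^ p) ^ (1 / p) ≤ C) →
      ∃ φ : ℕ → ℕ, StrictMono φ ∧ ∃ l : L,
        Tendsto (fun k => ((u (φ k) : L))) atTop (𝓝 l) := by
  obtain ⟨D, hcons, hcomp⟩ := hex
  rintro u ⟨C, hC⟩
  set ε : ℕ → ℝ := fun n => 1 / ((n : ℝ) + 1)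
  have hε : ∀ n, 0 < ε n := fun n => by positivity
  have hε1 : ∀ n, ε n ≤ 1 := fun n =>
    div_le_one_of_le₀ (le_add_of_nonneg_left n.cast_nonneg) (by positivity)
  have hu : ∀ n, ‖(u n : L)‖ + ‖G (u n)‖ ≤ 2 * C := fun n =>
    (add_le_two_mul_rpow_add_rpow_one_div (by linarith) (norm_nonneg _) (norm_nonneg _)).trans
      (by linarith [hC n])
  -- Approximants are chosen in every `𝒟_k`, so that they form a sequence over all of `ℕ`.
  choose v hv using fun k n => (D k).exists_lt_SDdef_add (u n : L) (G (u n)) (hε n)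
  obtain ⟨m, hm, hSm⟩ := extraction_forall_of_eventually fun n =>
    (hcons (u n)).eventually (gt_mem_nhds (hε n))
  have hbound : ∀ k n, (D k).dnorm (v k n) ≤ 2 * (2 * C) + 1 := fun k n => by
    linarith [(D k).dnorm_le_norm_add_norm hp.le (v k n),
      (D k).norm_add_norm_le_of_lt_SDdef_add (hv k n), hu n, hε1 n]
  obtain ⟨l, ψ, hψ, hlim⟩ := hcomp.exists_tendsto_subseq v hbound hm.injective
  have hclose : Tendsto (fun n => (u n : L) - (D (m n)).P (v (m n) n)) atTop (𝓝 0) := by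
    refine squeeze_zero_norm (a := fun n => ε n + ε n) (fun n => ?_) ?_
    · rw [norm_sub_rev]
      linarith [hv (m n) n, hSm n, norm_nonneg ((D (m n)).Gd (v (m n) n) - G (u n))]
    · have hε0 : Tendsto ε atTop (𝓝 0) := tendsto_one_div_add_atTop_nhds_zero_nat
      simpa using hε0.add hε0
  refine ⟨ψ, hψ, l, ?_⟩
  simpa using (hclose.comp hψ.tendsto_atTop).add hlim

theorem compact_consistent_GDs_implies_compact_embedding
    [CompleteSpace L] [CompleteSpace Lv]
    [TopologicalSpace.SeparableSpace L] [TopologicalSpace.SeparableSpace Lv]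
    (hreflL : Function.Surjective ⇑(inclusionInDoubleDual ℝ L))
    (hreflLv : Function.Surjective ⇑(inclusionInDoubleDual ℝ Lv))
    (WG : Submodule ℝ L) (hWGdense : Dense (WG : Set L))
    (G : ↥WG →ₗ[ℝ] Lv)
    (hGclosed : IsClosed (Set.range fun u : ↥WG => ((u : L), G u)))
    (p : ℝ) (hp : 1 < p)
    (V : Submodule ℝ (StrongDual ℝ L)) (hVclosed : IsClosed (V : Set (StrongDual ℝ L)))
    (CWGV : ℝ) (hCWGV : 0 < CWGV)
    (hequiv : ∀ u : ↥WG, (‖(u : L)‖ ^ p + ‖G u‖ ^ p) ^ (1 / p) ≤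
      CWGV * (semV V (u : L) ^ p + ‖G u‖ ^ p) ^ (1 / p))
    (hex : ∃ D : ℕ → GradDisc L Lv V p, Consistent WG G D ∧ CompactSeq D) :
    ∀ u : ℕ → ↥WG,
      (∃ C : ℝ, ∀ n : ℕ, (‖(u n : L)‖ ^ p + ‖G (u n)‖ ^ p) ^ (1 / p) ≤ C) →
      ∃ φ : ℕ → ℕ, StrictMono φ ∧ ∃ l : L,
        Tendsto (fun k => ((u (φ k) : L))) atTop (𝓝 l) :=
  compact_consistent_GDs_implies_compact_embedding_general WG G p hp V hex
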